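/- Let 𝒫 be a reparametrization category and D, E two 𝒫-spaces. Then there is a natural isomorphism colim(D ⊗ E) ≅ (colim D) × (colim E), where colim denotes the colimit of a 𝒫-space over 𝒫^op. -/
import Mathlib


/-- A reparametrization category: a small topologically enriched strict
semimonoidal category with contractible hom-spaces, in which every morphism
into a tensor product decomposes as a tensor of two morphisms. -/
structure RepCat where
  Obj : Type
  Hom : Obj → Obj → Type
  id : ∀ a, Hom a a
  comp : ∀ {a b c}, Hom a b → Hom b c → Hom a c
  id_comp : ∀ {a b} (f : Hom a b), comp (id a) f = f
  comp_id : ∀ {a b} (f : Hom a b), comp f (id b) = f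
  assoc : ∀ {a b c d} (f : Hom a b) (g : Hom b c) (h : Hom c d),
    comp (comp f g) h = comp f (comp g h)
  tObj : Obj → Obj → Obj
  tHom : ∀ {a b c d}, Hom a b → Hom c d → Hom (tObj a c) (tObj b d)
  tensor_id : ∀ a b, tHom (id a) (id b) = id (tObj a b)
  tensor_comp : ∀ {a b c a' b' c'} (f : Hom a b) (g : Hom b c)
    (f' : Hom a' b') (g' : Hom b' c'),
    tHom (comp f g) (comp f' g') = comp (tHom f f') (tHom g g')
  tObj_assoc : ∀ a b c, tObj (tObj a b) c = tObj a (tObj b c)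
  tHom_assoc : ∀ {a b c a' b' c'} (f : Hom a a') (g : Hom b b') (h : Hom c c'),
    HEq (tHom (tHom f g) h) (tHom f (tHom g h))
  htop : ∀ a b, TopologicalSpace (Hom a b)
  contractible : ∀ a b, @ContractibleSpace (Hom a b) (htop a b)
  comp_cont : ∀ a b c, @Continuous (Hom a b × Hom b c) (Hom a c)
    (@instTopologicalSpaceProd _ _ (htop a b) (htop b c)) (htop a c)
    (fun p => comp p.1 p.2)
  tHom_cont : ∀ a b c d, @Continuous (Hom a b × Hom c d) (Hom (tObj a c) (tObj b d))
    (@instTopologicalSpaceProd _ _ (htop a b) (htop c d)) (htop (tObj a c) (tObj b d))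
    (fun p => tHom p.1 p.2)
  decomp : ∀ {l l1' l2' : Obj} (φ : Hom l (tObj l1' l2')),
    ∃ (l1 l2 : Obj) (h : tObj l1 l2 = l) (φ₁ : Hom l1 l1') (φ₂ : Hom l2 l2'),
      φ = cast (congrArg (fun x => Hom x (tObj l1' l2')) h) (tHom φ₁ φ₂)

/-- A `𝒫`-space: a (set-valued) presheaf on `𝒫`. -/
structure PSpace (P : RepCat) where
  obj : P.Obj → Type
  map : ∀ {a b}, P.Hom a b → obj b → obj a
  map_id : ∀ (a) (x : obj a), map (P.id a) x = x
  map_comp : ∀ {a b c} (f : P.Hom a b) (g : P.Hom b c) (x : obj c),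
    map (P.comp f g) x = map f (map g x)

/-- A morphism (natural transformation) of `𝒫`-spaces. -/
structure PMor {P : RepCat} (D E : PSpace P) where
  app : ∀ a, D.obj a → E.obj a
  nat : ∀ {a b} (f : P.Hom a b) (x : D.obj b), app a (D.map f x) = E.map f (app b x)

def PMor.idm {P : RepCat} (D : PSpace P) : PMor D D :=
  ⟨fun _ x => x, fun _ _ => rfl⟩

def PMor.vcomp {P : RepCat} {D E F : PSpace P} (f : PMor D E) (g : PMor E F) :
    PMor D F :=
  ⟨fun a x => g.app a (f.app a x), by
    intro a b φ x
    show g.app a (f.app a (D.map φ x)) = _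
    rw [f.nat, g.nat]⟩

variable {P : RepCat}

/-- Triples representing elements of the tensor product of presheaves. -/
def Tri (D E : PSpace P) (L : P.Obj) : Type :=
  Σ l1 l2 : P.Obj, P.Hom L (P.tObj l1 l2) × D.obj l1 × E.obj l2

/-- The coend relation defining the tensor product of `𝒫`-spaces:
`(ψ, x·φ₁, y·φ₂) ∼ ((φ₁ ⊗ φ₂) ∘ ψ, x, y)`. -/
inductive TRel (D E : PSpace P) (L : P.Obj) : Tri D E L → Tri D E L → Prop
  | mk : ∀ {l1 l2 l1' l2' : P.Obj} (ψ : P.Hom L (P.tObj l1 l2))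
      (φ₁ : P.Hom l1 l1') (φ₂ : P.Hom l2 l2') (x : D.obj l1') (y : E.obj l2'),
      TRel D E L ⟨l1, l2, ψ, D.map φ₁ x, E.map φ₂ y⟩
        ⟨l1', l2', P.comp ψ (P.tHom φ₁ φ₂), x, y⟩

/-- The value `(D ⊗ E)(L)` of the tensor product of `𝒫`-spaces. -/
def tObj' (D E : PSpace P) (L : P.Obj) : Type := Quot (TRel D E L)

/-- The contravariant action of the tensor product of `𝒫`-spaces. -/
def tMap (D E : PSpace P) {L L' : P.Obj} (ω : P.Hom L' L) :
    tObj' D E L → tObj' D E L' :=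
  Quot.lift (fun t => Quot.mk _ ⟨t.1, t.2.1, P.comp ω t.2.2.1, t.2.2.2⟩) (by
    rintro _ _ ⟨ψ, φ₁, φ₂, x, y⟩
    dsimp only
    have h := Quot.sound (TRel.mk (D := D) (E := E) (L := L')
      (P.comp ω ψ) φ₁ φ₂ x y)
    rwa [P.assoc] at h)

/-- The tensor product of `𝒫`-spaces,
`D ⊗ E = ∫^{(ℓ₁,ℓ₂)} 𝒫(−, ℓ₁+ℓ₂) × D(ℓ₁) × E(ℓ₂)`. -/
def tensor (D E : PSpace P) : PSpace P where
  obj := tObj' D E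
  map := tMap D E
  map_id := by
    intro a x
    refine Quot.inductionOn x ?_
    rintro ⟨l1, l2, ψ, u, v⟩
    show Quot.mk _ _ = Quot.mk _ _
    rw [P.id_comp]
  map_comp := by
    intro a b c f g x
    refine Quot.inductionOn x ?_
    rintro ⟨l1, l2, ψ, u, v⟩
    show Quot.mk _ _ = Quot.mk _ _
    rw [P.assoc]

/-- The tensor product of morphisms of `𝒫`-spaces. -/
def tmor {D D' E E' : PSpace P} (f : PMor D D') (g : PMor E E') :
    PMor (tensor D E) (tensor D' E') where
  app L := Quot.lift
    (fun t => Quot.mk _ ⟨t.1, t.2.1, t.2.2.1, f.app _ t.2.2.2.1, g.app _ t.2.2.2.2⟩)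
    (by
      rintro _ _ ⟨ψ, φ₁, φ₂, x, y⟩
      dsimp only
      rw [f.nat, g.nat]
      exact Quot.sound (TRel.mk ψ φ₁ φ₂ (f.app _ x) (g.app _ y)))
  nat := by
    intro a b φ x
    refine Quot.inductionOn x ?_
    intro t
    rfl

/-- The colimit of a `𝒫`-space over `𝒫^op`. -/
def colimP {P : RepCat} (D : PSpace P) : Type :=
  Quot (fun x y : Σ a : P.Obj, D.obj a => ∃ φ : P.Hom x.1 y.1, x.2 = D.map φ y.2)

/-- The map on colimits induced by a morphism of `𝒫`-spaces. -/
def colimMap {P : RepCat} {D E : PSpace P} (f : PMor D E) :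
    colimP D → colimP E :=
  Quot.lift (fun t => Quot.mk _ ⟨t.1, f.app t.1 t.2⟩) (by
    rintro ⟨a, x⟩ ⟨b, y⟩ ⟨φ, hφ⟩
    dsimp only
    refine Quot.sound ⟨φ, ?_⟩
    show f.app a x = E.map φ (f.app b y)
    have hφ' : x = D.map φ y := hφ
    rw [hφ', f.nat])


section Aux

variable (D E : PSpace P)

/-- Forward map on representatives. -/
def fwdFun : (Σ a : P.Obj, (tensor D E).obj a) → colimP D × colimP E :=
  fun t => Quot.lift
    (fun s : Tri D E t.1 =>
      (Quot.mk _ ⟨s.1, s.2.2.2.1⟩, Quot.mk _ ⟨s.2.1, s.2.2.2.2⟩))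
    (by
      rintro _ _ ⟨ψ, φ₁, φ₂, x, y⟩
      dsimp only
      refine Prod.ext ?_ ?_
      · exact Quot.sound ⟨φ₁, rfl⟩
      · exact Quot.sound ⟨φ₂, rfl⟩) t.2

def fwd : colimP (tensor D E) → colimP D × colimP E :=
  Quot.lift (fwdFun D E) (by
    rintro ⟨a, t⟩ ⟨b, t'⟩ ⟨φ, hφ⟩
    have hφ' : t = tMap D E φ t' := hφ
    rw [show (⟨a, t⟩ : Σ a : P.Obj, (tensor D E).obj a) = ⟨a, tMap D E φ t'⟩ from
      congrArg _ hφ']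
    refine Quot.inductionOn t' ?_
    rintro ⟨l1, l2, ψ, x, y⟩
    rfl)

/-- Backward map on representatives. -/
def bwdFun (s : Σ a : P.Obj, D.obj a) (t : Σ b : P.Obj, E.obj b) :
    colimP (tensor D E) :=
  Quot.mk _ ⟨P.tObj s.1 t.1,
    Quot.mk _ ⟨s.1, t.1, P.id _, s.2, t.2⟩⟩

theorem bwdFun_rel_right (s : Σ a : P.Obj, D.obj a)
    {t t' : Σ b : P.Obj, E.obj b} (φ : P.Hom t.1 t'.1)
    (h : t.2 = E.map φ t'.2) : bwdFun D E s t = bwdFun D E s t' := by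
  obtain ⟨a, x⟩ := s; obtain ⟨b, y⟩ := t; obtain ⟨b', y'⟩ := t'
  dsimp only at h φ ⊢
  subst h
  unfold bwdFun
  have h1 : (Quot.mk _ ⟨a, b, P.id _, x, E.map φ y'⟩ : tObj' D E (P.tObj a b))
      = Quot.mk _ ⟨a, b', P.comp (P.id _) (P.tHom (P.id a) φ), x, y'⟩ := by
    have := Quot.sound (TRel.mk (D := D) (E := E) (L := P.tObj a b)
      (P.id _) (P.id a) φ x y')
    rwa [D.map_id] at this
  dsimp only
  rw [h1]
  refine Quot.sound ⟨P.tHom (P.id a) φ, ?_⟩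
  show (Quot.mk _ _ : tObj' D E _) = Quot.mk _ _
  rw [P.id_comp, P.comp_id]

theorem bwdFun_rel_left {s s' : Σ a : P.Obj, D.obj a}
    (t : Σ b : P.Obj, E.obj b) (φ : P.Hom s.1 s'.1)
    (h : s.2 = D.map φ s'.2) : bwdFun D E s t = bwdFun D E s' t := by
  obtain ⟨a, x⟩ := s; obtain ⟨a', x'⟩ := s'; obtain ⟨b, y⟩ := t
  dsimp only at h φ ⊢
  subst h
  unfold bwdFun
  have h1 : (Quot.mk _ ⟨a, b, P.id _, D.map φ x', y⟩ : tObj' D E (P.tObj a b))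
      = Quot.mk _ ⟨a', b, P.comp (P.id _) (P.tHom φ (P.id b)), x', y⟩ := by
    have := Quot.sound (TRel.mk (D := D) (E := E) (L := P.tObj a b)
      (P.id _) φ (P.id b) x' y)
    rwa [E.map_id] at this
  dsimp only
  rw [h1]
  refine Quot.sound ⟨P.tHom φ (P.id b), ?_⟩
  show (Quot.mk _ _ : tObj' D E _) = Quot.mk _ _
  rw [P.id_comp, P.comp_id]

def bwd : colimP D × colimP E → colimP (tensor D E) :=
  fun p => Quot.lift
    (fun s => Quot.lift (bwdFun D E s)
      (fun _ _ h => bwdFun_rel_right D E s h.choose h.choose_spec) p.2)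
    (by
      rintro s s' ⟨φ, h⟩
      refine Quot.inductionOn p.2 ?_
      intro t
      exact bwdFun_rel_left D E t φ h) p.1

theorem fwd_bwd (p : colimP D × colimP E) : fwd D E (bwd D E p) = p := by
  obtain ⟨u, v⟩ := p
  refine Quot.inductionOn u ?_
  intro s
  refine Quot.inductionOn v ?_
  intro t
  rfl

theorem bwd_fwd (z : colimP (tensor D E)) : bwd D E (fwd D E z) = z := by
  refine Quot.inductionOn z ?_
  rintro ⟨L, t⟩
  refine Quot.inductionOn t ?_
  rintro ⟨l1, l2, ψ, x, y⟩
  show bwdFun D E ⟨l1, x⟩ ⟨l2, y⟩ = _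
  refine Eq.symm (Quot.sound ⟨ψ, ?_⟩)
  show (Quot.mk _ _ : tObj' D E _) = Quot.mk _ _
  rw [P.comp_id]

end Aux

/-- `colim (D ⊗ E) ≅ (colim D) × (colim E)`, naturally in `D` and `E`. -/
theorem colim_tensor (P : RepCat) :
    ∃ e : ∀ D E : PSpace P, colimP (tensor D E) ≃ colimP D × colimP E,
      ∀ (D D' E E' : PSpace P) (f : PMor D D') (g : PMor E E')
        (z : colimP (tensor D E)),
        e D' E' (colimMap (tmor f g) z) =
          (colimMap f (e D E z).1, colimMap g (e D E z).2) := by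
  refine ⟨fun D E => ⟨fwd D E, bwd D E, bwd_fwd D E, fwd_bwd D E⟩, ?_⟩
  intro D D' E E' f g z
  refine Quot.inductionOn z ?_
  rintro ⟨L, t⟩
  refine Quot.inductionOn t ?_
  rintro ⟨l1, l2, ψ, x, y⟩
  rfl
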